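/- Let p ≡ 5 (mod 8) be a prime, n = (p-1)/2, and ζ = e^(2πi/(p-1)). Then the product over 1 ≤ i < j ≤ n of (ζ^(2j) - ζ^(2i)) equals n^(n/2) · (-1)^((n-2)/4), an integer. -/

import Mathlib

/-!
Put `ω = ζ ^ 2 = exp (2πi / n)`. Each factor splits as
`ω ^ j - ω ^ i = exp (iπ ((i + j) / n + 1 / 2)) * 2 sin (π (j - i) / n)`.
The phases multiply to `exp (iπ (3n + 2)(n - 1) / 4)`, which is `(-1) ^ ((n - 2) / 4)` when
`n ≡ 2 (mod 4)`. The sines are positive; grouped by `d = j - i` they give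
`∏ d, (2 sin (π d / n)) ^ (n - d)`, and the symmetry `d ↦ n - d` shows that the square of this is
`(∏ d, 2 sin (π d / n)) ^ n = n ^ n`, the inner product being `‖∏ d, (1 - ω ^ d)‖ = n`.
-/

open Complex Finset
open scoped Real

theorem exp_ofReal_mul_I_sub_exp_ofReal_mul_I (a b : ℝ) :
    exp (a * I) - exp (b * I) =
      exp (↑((a + b) / 2 + π / 2) * I) * ↑(2 * Real.sin ((a - b) / 2)) := by
  have hI : exp (↑(π / 2) * I) = I := by
    rw [exp_mul_I, ← ofReal_cos, ← ofReal_sin, Real.cos_pi_div_two, Real.sin_pi_div_two]; simp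
  have ha : exp (a * I) = exp ((a + b) / 2 * I) * exp ((a - b) / 2 * I) := by
    rw [← exp_add]; ring_nf
  have hb : exp (b * I) = exp ((a + b) / 2 * I) * exp (-((a - b) / 2) * I) := by
    rw [← exp_add]; ring_nf
  rw [ofReal_add, add_mul, exp_add, hI, ofReal_mul, ofReal_sin, Complex.sin, ha, hb]
  push_cast
  linear_combination (exp ((a + b) / 2 * I) * (exp ((a - b) / 2 * I) -
    exp (-((a - b) / 2) * I))) * I_sq

theorem norm_exp_ofReal_mul_I_sub_exp_ofReal_mul_I (a b : ℝ) :
    ‖exp (a * I) - exp (b * I)‖ = |2 * Real.sin ((a - b) / 2)| := by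
  rw [exp_ofReal_mul_I_sub_exp_ofReal_mul_I, norm_mul, norm_exp_ofReal_mul_I, one_mul,
    norm_real, Real.norm_eq_abs]

theorem sin_pi_mul_div_pos {n d : ℕ} (hd₀ : 0 < d) (hdn : d < n) :
    0 < Real.sin (π * d / n) := by
  have hn : (0 : ℝ) < n := by exact_mod_cast hd₀.trans hdn
  apply Real.sin_pos_of_pos_of_lt_pi (by positivity)
  rw [div_lt_iff₀ hn, mul_lt_mul_iff_right₀ Real.pi_pos]
  exact_mod_cast hdn

theorem prod_Ico_two_sin_pi_mul_div {n : ℕ} (hn : 0 < n) :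
    ∏ d ∈ Ico 1 n, 2 * Real.sin (π * d / n) = n := by
  obtain ⟨m, rfl⟩ := Nat.exists_eq_add_one_of_ne_zero hn.ne'
  have hμ := Complex.isPrimitiveRoot_exp (m + 1) m.succ_ne_zero
  have hpow (k : ℕ) : exp (2 * π * I / ↑(m + 1)) ^ k = exp (↑(2 * π * k / ↑(m + 1)) * I) := by
    rw [← exp_nat_mul]; congr 1; push_cast; ring
  have h := congrArg norm hμ.prod_one_sub_pow_eq_order
  rw [norm_prod, ← Nat.cast_add_one, norm_natCast] at h
  rw [prod_Ico_eq_prod_range, add_tsub_cancel_right]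
  refine (prod_congr rfl fun k hk => ?_).trans h
  rw [norm_sub_rev, hpow, ← exp_zero, ← zero_mul I, ← ofReal_zero,
    norm_exp_ofReal_mul_I_sub_exp_ofReal_mul_I, abs_of_pos]
  · congr 2; push_cast; ring
  · have := sin_pi_mul_div_pos (n := m + 1) (d := 1 + k) (by omega) (by simp at hk; omega)
    convert mul_pos two_pos this using 3; push_cast; ring

theorem prod_Icc_prod_Icc_pred_sub {M : Type*} [CommMonoid M] (g : ℕ → M) (n : ℕ) :
    ∏ j ∈ Icc 1 n, ∏ i ∈ Icc 1 (j - 1), g (j - i) = ∏ d ∈ Ico 1 n, g d ^ (n - d) := by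
  induction n with
  | zero => simp
  | succ n ih =>
    have hrow : ∏ i ∈ Icc 1 n, g (n + 1 - i) = ∏ d ∈ Ico 1 (n + 1), g d := by
      rw [← Ico_add_one_right_eq_Icc, prod_Ico_reflect g 1 (n := n + 1) (by omega)]; simp
    have hlast : ∏ d ∈ Ico 1 n, g d ^ (n - d) = ∏ d ∈ Ico 1 (n + 1), g d ^ (n - d) :=
      prod_subset (Ico_subset_Ico_right n.le_succ) fun d hd hd' => by
        simp only [mem_Ico, not_and, not_lt] at hd hd'
        rw [show n - d = 0 by omega, pow_zero]
    have hexp : ∏ d ∈ Ico 1 (n + 1), g d ^ (n + 1 - d) =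
        ∏ d ∈ Ico 1 (n + 1), g d ^ (n - d) * g d :=
      prod_congr rfl fun d hd => by
        rw [← pow_succ]; congr 1; simp only [mem_Ico] at hd; omega
    rw [prod_Icc_succ_top (by omega), ih, add_tsub_cancel_right, hrow, hexp, prod_mul_distrib,
      hlast]

theorem prod_Ico_pow_sub_sq {M : Type*} [CommMonoid M] (g : ℕ → M) (n : ℕ)
    (hg : ∀ d < n, g (n - d) = g d) :
    (∏ d ∈ Ico 1 n, g d ^ (n - d)) ^ 2 = (∏ d ∈ Ico 1 n, g d) ^ n := by
  have hrefl : ∏ d ∈ Ico 1 n, g d ^ (n - d) = ∏ d ∈ Ico 1 n, g d ^ d := calc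
    _ = ∏ d ∈ Ico 1 n, g (n - d) ^ (n - d) :=
      prod_congr rfl fun d hd => by rw [hg d (mem_Ico.1 hd).2]
    _ = ∏ d ∈ Ico 1 n, g d ^ d := by
      rw [prod_Ico_reflect (fun d => g d ^ d) 1 (n := n) n.le_succ]; simp
  rw [sq, ← prod_pow]
  nth_rw 2 [hrefl]
  rw [← prod_mul_distrib]
  refine prod_congr rfl fun d hd => ?_
  rw [← pow_add, Nat.sub_add_cancel (mem_Ico.1 hd).2.le]

theorem prod_Icc_prod_Icc_two_sin {n : ℕ} (hn : Even n) :
    ∏ j ∈ Icc 1 n, ∏ i ∈ Icc 1 (j - 1), 2 * Real.sin (π * ↑(j - i) / n) = (n : ℝ) ^ (n / 2) := by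
  rcases n.eq_zero_or_pos with rfl | hn₀
  · simp
  set g : ℕ → ℝ := fun d => 2 * Real.sin (π * d / n)
  have hpos : 0 < ∏ d ∈ Ico 1 n, g d ^ (n - d) := prod_pos fun d hd =>
    pow_pos (mul_pos two_pos (sin_pi_mul_div_pos (mem_Ico.1 hd).1 (mem_Ico.1 hd).2)) _
  have hsym (d : ℕ) (hd : d < n) : g (n - d) = g d := by
    simp only [g]
    rw [Nat.cast_sub hd.le, show π * (n - d) / n = π - π * d / n by field_simp, Real.sin_pi_sub]
  have hsq := prod_Ico_pow_sub_sq g n hsym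
  rw [prod_Ico_two_sin_pi_mul_div hn₀] at hsq
  refine (prod_Icc_prod_Icc_pred_sub g n).trans <|
    (pow_left_inj₀ hpos.le (by positivity) two_ne_zero).1 ?_
  rw [hsq, ← pow_mul, Nat.div_mul_cancel hn.two_dvd]

theorem sum_Icc_sum_Icc_pred_add (a b : ℝ) (m : ℕ) :
    ∑ j ∈ Icc 1 m, ∑ i ∈ Icc 1 (j - 1), (a * (i + j) + b) =
      a * ((m - 1) * m * (m + 1) / 2) + b * (m * (m - 1) / 2) := by
  have hgauss (k : ℕ) : ∑ i ∈ Icc 1 k, (i : ℝ) = k * (k + 1) / 2 := by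
    induction k with
    | zero => simp
    | succ k ih => rw [sum_Icc_succ_top (by omega), ih]; push_cast; ring
  induction m with
  | zero => simp
  | succ m ih =>
    rw [sum_Icc_succ_top (by omega), ih, add_tsub_cancel_right, sum_add_distrib, ← mul_sum,
      sum_add_distrib, hgauss, sum_const, sum_const, Nat.card_Icc, add_tsub_cancel_right,
      nsmul_eq_mul, nsmul_eq_mul]
    push_cast
    ring

theorem prod_Icc_prod_Icc_exp_sub_exp {n : ℕ} (hn : n ≠ 0) :
    ∏ j ∈ Icc 1 n, ∏ i ∈ Icc 1 (j - 1),
        (exp (↑(2 * π * j / n) * I) - exp (↑(2 * π * i / n) * I)) =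
      exp (↑(π * ((3 * n + 2) * (n - 1) / 4)) * I) *
        ↑(∏ j ∈ Icc 1 n, ∏ i ∈ Icc 1 (j - 1), 2 * Real.sin (π * ↑(j - i) / n)) := by
  have hfactor (j i : ℕ) (hi : i ∈ Icc 1 (j - 1)) :
      exp (↑(2 * π * j / n) * I) - exp (↑(2 * π * i / n) * I) =
        exp (↑(π * ((n : ℝ)⁻¹ * (i + j) + 1 / 2)) * I) * ↑(2 * Real.sin (π * ↑(j - i) / n)) := by
    rw [exp_ofReal_mul_I_sub_exp_ofReal_mul_I, Nat.cast_sub (by simp at hi; omega)]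
    congr 4 <;> ring
  rw [prod_congr rfl fun j _ => prod_congr rfl (hfactor j)]
  simp only [prod_mul_distrib, ← exp_sum, ← ofReal_prod, ← sum_mul, ← ofReal_sum, ← mul_sum,
    sum_Icc_sum_Icc_pred_add]
  congr 4
  field_simp
  ring

open Complex in
theorem stmt_12_general (p n : ℕ) (hp8 : p % 8 = 5) (hpn : p = 2 * n + 1) :
    (∏ j ∈ Finset.Icc 1 n, ∏ i ∈ Finset.Icc 1 (j - 1),
        (Complex.exp (2 * Real.pi * I / (p - 1)) ^ (2 * j) -
          Complex.exp (2 * Real.pi * I / (p - 1)) ^ (2 * i))) =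
      (n : ℂ) ^ (n / 2) * (-1) ^ ((n - 2) / 4) := by
  obtain ⟨t, ht⟩ : ∃ t, n = 4 * t + 2 := ⟨n / 4, by omega⟩
  have hn : (n : ℂ) ≠ 0 := Nat.cast_ne_zero.2 (by omega)
  have hζ (k : ℕ) : exp (2 * π * I / (p - 1)) ^ (2 * k) = exp (↑(2 * π * k / n) * I) := by
    rw [← exp_nat_mul, hpn, Nat.cast_add_one, add_sub_cancel_right]; push_cast; field_simp
  have hphase : exp (↑(π * ((3 * n + 2) * (n - 1) / 4)) * I) = (-1 : ℂ) ^ ((n - 2) / 4) := by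
    -- `(3n + 2)(n - 1) / 4 = (3t + 2)(4t + 1) = t + 2 (6t² + 5t + 1)`
    rw [show π * ((3 * n + 2) * (n - 1) / 4) =
        ((((n - 2) / 4 + 2 * (6 * t ^ 2 + 5 * t + 1) : ℕ) : ℝ) * π) by
      rw [ht, show (4 * t + 2 - 2) / 4 = t by omega]; push_cast; ring,
      ofReal_mul, mul_assoc, ofReal_natCast, exp_nat_mul, exp_pi_mul_I, pow_add, pow_mul,
      neg_one_sq, one_pow, mul_one]
  simp_rw [hζ]
  rw [prod_Icc_prod_Icc_exp_sub_exp (by omega), hphase,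
    prod_Icc_prod_Icc_two_sin ⟨2 * t + 1, by omega⟩]
  push_cast
  ring

open Complex in
theorem stmt_12 (p n : ℕ) (hp : p.Prime) (hp8 : p % 8 = 5) (hpn : p = 2 * n + 1) :
    (∏ j ∈ Finset.Icc 1 n, ∏ i ∈ Finset.Icc 1 (j - 1),
        (Complex.exp (2 * Real.pi * I / (p - 1)) ^ (2 * j) -
          Complex.exp (2 * Real.pi * I / (p - 1)) ^ (2 * i))) =
      (n : ℂ) ^ (n / 2) * (-1) ^ ((n - 2) / 4) :=
  stmt_12_general p n hp8 hpn
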